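/- Suppose n ≥ 2, T ∈ L(H), M and N are closed invariant subspaces of T with M ⊆ N; write H = M ⊕ (N ⊖ M) ⊕ N^⊥. Suppose h_1,...,h_n ∈ M, u_1,...,u_n ∈ N ⊖ M, v_2,...,v_n ∈ N^⊥ satisfy: (a) the T-cyclic subspace generated by h_1 ⊕ u_1 ⊕ 0 equals N, and (b) the T-invariant subspace generated by h_1 ⊕ u_1 ⊕ 0 together with h_k ⊕ u_k ⊕ v_k (k = 2,...,n) equals H. Then for every h_0 ∈ M, the T-invariant subspace generated by h_0 ⊕ u_1 ⊕ v_2 together with (h_0 − h_1) ⊕ 0 ⊕ v_k (k = 2,...,n) equals H. -/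

import Mathlib

/-! The new family generates the old one. The difference of its first two vectors is
`h₁ ⊕ u₁ ⊕ 0`, so by (a) its invariant subspace contains `N`, hence `h₀` and `h₁`; subtracting
`h₀ - h₁` from the remaining vectors gives every `v_k`. Then every generator in (b) lies in it. -/

noncomputable section
namespace Paper

variable {H : Type} [NormedAddCommGroup H] [InnerProductSpace ℂ H] [CompleteSpace H]

/-- The smallest closed `T`-invariant subspace containing all the `x i`. -/
def orbitClosure (T : H →L[ℂ] H) {ι : Type} (x : ι → H) : Submodule ℂ H :=
  (Submodule.span ℂ {y | ∃ (i : ι) (j : ℕ), y = (T ^ j) (x i)}).topologicalClosure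

section OrbitClosure

variable {E : Type} [NormedAddCommGroup E] [InnerProductSpace ℂ E]
variable (T : E →L[ℂ] E) {ι : Type} (x : ι → E)

lemma mem_orbitClosure (i : ι) : x i ∈ orbitClosure T x :=
  Submodule.le_topologicalClosure _ (Submodule.subset_span ⟨i, 0, rfl⟩)

lemma isClosed_orbitClosure : IsClosed (orbitClosure T x : Set E) :=
  Submodule.isClosed_topologicalClosure _

lemma mapsTo_orbitClosure : Set.MapsTo T (orbitClosure T x) (orbitClosure T x) := by
  set s : Set E := {y | ∃ (i : ι) (j : ℕ), y = (T ^ j) (x i)}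
  have hs : Set.MapsTo T s s := by
    rintro _ ⟨i, j, rfl⟩
    exact ⟨i, j + 1, by rw [pow_succ']; rfl⟩
  have hspan : Submodule.span ℂ s ≤ (Submodule.span ℂ s).comap (T : E →ₗ[ℂ] E) :=
    Submodule.span_le.2 fun _ hz ↦ Submodule.subset_span (hs hz)
  exact Set.MapsTo.closure (fun _ hy ↦ hspan hy) T.continuous

variable {T x}

lemma orbitClosure_le {S : Submodule ℂ E} (hS : IsClosed (S : Set E))
    (hinv : Set.MapsTo T S S) (hx : ∀ i, x i ∈ S) : orbitClosure T x ≤ S := by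
  refine Submodule.topologicalClosure_minimal _ (Submodule.span_le.2 ?_) hS
  rintro _ ⟨i, j, rfl⟩
  rw [FunLike.coe_pow_eq_iterate]
  exact hinv.iterate j (hx i)

lemma orbitClosure_le_orbitClosure {κ : Type} {y : κ → E}
    (hx : ∀ i, x i ∈ orbitClosure T y) : orbitClosure T x ≤ orbitClosure T y :=
  orbitClosure_le (isClosed_orbitClosure T y) (mapsTo_orbitClosure T y) hx

end OrbitClosure

theorem statement6 (n : ℕ) (hn : 2 ≤ n) (T : H →L[ℂ] H)
    (M N : Submodule ℂ H)
    (hMN : M ≤ N)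
    (h u v : Fin n → H)
    (hh : ∀ k, h k ∈ M) (hu : ∀ k, u k ∈ N ⊓ Mᗮ)
    (ha : orbitClosure T (fun _ : Fin 1 => h ⟨0, by omega⟩ + u ⟨0, by omega⟩) = N)
    (hb : orbitClosure T
        (fun k : Fin n => if k = ⟨0, by omega⟩ then h ⟨0, by omega⟩ + u ⟨0, by omega⟩
          else h k + u k + v k) = ⊤)
    (h₀ : H) (hh₀ : h₀ ∈ M) :
    orbitClosure T
        (fun k : Fin n => if k = ⟨0, by omega⟩ then h₀ + u ⟨0, by omega⟩ + v ⟨1, by omega⟩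
          else (h₀ - h ⟨0, by omega⟩) + v k) = ⊤ := by
  set i₀ : Fin n := ⟨0, by omega⟩
  set g : Fin n → H := fun k ↦ if k = i₀ then h₀ + u i₀ + v ⟨1, by omega⟩ else (h₀ - h i₀) + v k
  set E := orbitClosure T g
  have hg : ∀ k, k ≠ i₀ → h₀ - h i₀ + v k ∈ E := fun k hk ↦ by
    simpa only [g, if_neg hk] using mem_orbitClosure T g k
  have hhu₀ : h i₀ + u i₀ ∈ E := by
    have hne : (⟨1, by omega⟩ : Fin n) ≠ i₀ := by simp [i₀, Fin.ext_iff]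
    have hg₀ : g i₀ ∈ E := mem_orbitClosure T g i₀
    simp only [g, if_pos] at hg₀
    convert E.sub_mem hg₀ (hg _ hne) using 1
    abel
  have hNE : N ≤ E := ha ▸ orbitClosure_le_orbitClosure fun _ ↦ hhu₀
  have hM : ∀ {x}, x ∈ M → x ∈ E := fun hx ↦ hNE (hMN hx)
  rw [eq_top_iff, ← hb]
  refine orbitClosure_le_orbitClosure fun k ↦ ?_
  split_ifs with hk
  · exact hhu₀
  · have hvk : v k = (h₀ - h i₀ + v k) - h₀ + h i₀ := by abel
    rw [hvk]
    exact E.add_mem (E.add_mem (hM (hh k)) (hNE (hu k).1))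
      (E.add_mem (E.sub_mem (hg k hk) (hM hh₀)) (hM (hh i₀)))

end Paper
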